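/- Let U ⊆ ℂ be a bounded connected open set, and let W_n, W ⊆ U be connected open sets with 0 ∈ W_n for all n and 0 ∈ W. Assume (W_n) converges to W in the kernel sense, the set F associated to (W_n) and W has empty interior in ℂ, and the function p ↦ η_W(p) is continuous on W. Then η_{W_n} → η_W uniformly on every compact subset of W. (This is Theorem 1.8(2) of the paper for the trivial single-leaf nonsingular foliation of U.) -/

import Mathlib

open Filter Metric Topology Set

/-- The kernel of a sequence of open sets: the union over `n` of the connected
component containing `0` of the interior of `⋂ k ≥ n, W k`. -/
def seqKernel {X : Type*} [TopologicalSpace X] [Zero X] (W : ℕ → Set X) : Set X :=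
  ⋃ n, connectedComponentIn (interior (⋂ k, ⋂ (_ : n ≤ k), W k)) 0

/-- The set `F` associated to a sequence `(W n)` and a limit set `W₀`: points
outside `closure W₀` that are limits of points `p k ∈ W (n k) \ closure W₀`
along a strictly increasing sequence of indices. -/
def Fset {X : Type*} [TopologicalSpace X] (W : ℕ → Set X) (W₀ : Set X) : Set X :=
  {p | p ∉ closure W₀ ∧ ∃ nk : ℕ → ℕ, StrictMono nk ∧ ∃ pk : ℕ → X,
    (∀ k, pk k ∈ W (nk k) \ closure W₀) ∧ Tendsto pk atTop (nhds p)}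

/-- The modulus-of-uniformization function of a plane domain `Ω` (for the trivial
single-leaf foliation): the supremum of `|f'(0)|` over holomorphic maps
`f : 𝔻 → Ω` with `f 0 = p` (with `sSup ∅ = 0`). -/
noncomputable def eta (Ω : Set ℂ) (p : ℂ) : ℝ :=
  sSup {r : ℝ | ∃ f : ℂ → ℂ, DifferentiableOn ℂ f (ball (0 : ℂ) 1) ∧ f 0 = p ∧
    (∀ z ∈ ball (0 : ℂ) 1, f z ∈ Ω) ∧ r = ‖deriv f 0‖}

/-!
Lower bound: a near-extremal disc for `η_{W₀}(p₀)`, restricted to `|z| ≤ r < 1`, has compact image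
in the kernel, so some thickening of that image lies in `W n` for all large `n`; translating it by
`p - p₀` gives a competitor for `η_{W n}(p)` for every `p` near `p₀`.

Upper bound: if `η_{W n_k}(p_k) > η_{W₀}(p₀) + ε` with `n_k → ∞` and `p_k → p₀`, Montel's theorem
gives near-extremal discs converging on `|z| ≤ r`. The limit has nonzero derivative at `0`, so by
Hurwitz's theorem every point of its image has a disc lying in all but finitely many `W n_k`; a
connectedness argument puts the image in the kernel of this subsequence, which is `W₀`, and the
limit contradicts the choice of `r` close to `1`.

These two semicontinuity bounds and the continuity of `η_{W₀}` give locally uniform convergence.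
-/

open Bornology

theorem eta_nonneg (Ω : Set ℂ) (p : ℂ) : 0 ≤ eta Ω p :=
  Real.sSup_nonneg <| by rintro _ ⟨f, -, -, -, rfl⟩; exact norm_nonneg _

theorem exists_lt_norm_deriv_of_lt_eta {Ω : Set ℂ} {p : ℂ} {c : ℝ} (hc : c < eta Ω p)
    (hc₀ : 0 ≤ c) : ∃ f : ℂ → ℂ, DifferentiableOn ℂ f (ball 0 1) ∧ f 0 = p ∧
      MapsTo f (ball 0 1) Ω ∧ c < ‖deriv f 0‖ := by
  by_contra! h
  refine hc.not_ge (Real.sSup_le ?_ hc₀)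
  rintro _ ⟨f, hf, hf0, hfΩ, rfl⟩
  exact h f hf hf0 hfΩ

theorem norm_deriv_le_of_mapsTo_closedBall {f : ℂ → ℂ} {c : ℂ} {R M : ℝ} (hR : 0 < R)
    (hf : DifferentiableOn ℂ f (ball c R)) (hfM : MapsTo f (ball c R) (closedBall 0 M)) :
    ‖deriv f c‖ ≤ 2 * M / R := by
  refine Complex.norm_deriv_le_div_of_mapsTo_ball hf (fun z hz => ?_) hR
  have hz := mem_closedBall.1 (hfM hz)
  have hc := mem_closedBall.1 (hfM (mem_ball_self hR))
  exact mem_closedBall.2 ((dist_triangle_right _ _ 0).trans (by linarith))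

theorem mul_norm_deriv_le_eta {Ω : Set ℂ} (hΩ : IsBounded Ω) {f : ℂ → ℂ} {r : ℝ} (hr : 0 < r)
    (hf : DifferentiableOn ℂ f (ball 0 r)) (hfΩ : MapsTo f (ball 0 r) Ω) :
    r * ‖deriv f 0‖ ≤ eta Ω (f 0) := by
  obtain ⟨M, hM⟩ := hΩ.subset_closedBall 0
  have hscale : MapsTo (fun z : ℂ => (r : ℂ) * z) (ball 0 1) (ball 0 r) := by
    intro z hz
    rw [mem_ball_zero_iff] at hz ⊢
    rw [norm_mul, Complex.norm_real, Real.norm_of_nonneg hr.le]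
    exact mul_lt_of_lt_one_right hr hz
  refine le_csSup ⟨2 * M, ?_⟩ ⟨fun z => f (r * z), hf.comp (differentiableOn_id.const_mul _) hscale,
    by simp, hfΩ.comp hscale, ?_⟩
  · rintro _ ⟨g, hg, -, hgΩ, rfl⟩
    simpa using norm_deriv_le_of_mapsTo_closedBall one_pos hg (fun z hz => hM (hgΩ z hz))
  · rw [deriv_comp_mul_left, mul_zero, norm_smul, Complex.norm_real, Real.norm_of_nonneg hr.le]

section Kernel

variable {X : Type*} [TopologicalSpace X]

/-- `seqKernel W` is definitionally `⋃ n, connectedComponentIn (tailInterior W n) 0`. -/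
def tailInterior (W : ℕ → Set X) (n : ℕ) : Set X :=
  interior (⋂ k, ⋂ (_ : n ≤ k), W k)

variable {W : ℕ → Set X}

theorem monotone_tailInterior : Monotone (tailInterior W) :=
  fun _ _ hmn => interior_mono <| iInter₂_mono' fun k hk => ⟨k, hmn.trans hk, subset_rfl⟩

theorem tailInterior_subset {n k : ℕ} (h : n ≤ k) : tailInterior W n ⊆ W k :=
  interior_subset.trans (iInter₂_subset k h)

theorem subset_tailInterior {t : Set X} (ht : IsOpen t) {n : ℕ} (h : ∀ k, n ≤ k → t ⊆ W k) :
    t ⊆ tailInterior W n :=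
  ht.subset_interior_iff.2 (subset_iInter₂ h)

theorem IsCompact.exists_subset_tailInterior {C : Set X} (hC : IsCompact C)
    (hCW : C ⊆ ⋃ n, tailInterior W n) : ∃ n, C ⊆ tailInterior W n :=
  hC.elim_directed_cover _ (fun _ => isOpen_interior) hCW monotone_tailInterior.directed_le

variable [Zero X]

theorem seqKernel_subset_iUnion_tailInterior : seqKernel W ⊆ ⋃ n, tailInterior W n :=
  iUnion_mono fun _ => connectedComponentIn_subset _ _

theorem IsPreconnected.subset_seqKernel {C : Set X} (hC : IsPreconnected C) {n : ℕ}
    (hCn : C ⊆ tailInterior W n) (hCW : (C ∩ seqKernel W).Nonempty) : C ⊆ seqKernel W := by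
  obtain ⟨y, hyC, hyW⟩ := hCW
  obtain ⟨m, hym⟩ := mem_iUnion.1 hyW
  have hy : y ∈ _root_.connectedComponentIn (tailInterior W (max n m)) 0 :=
    connectedComponentIn_mono _ (monotone_tailInterior (le_max_right n m)) hym
  have hCy : C ⊆ _root_.connectedComponentIn (tailInterior W (max n m)) y :=
    hC.subset_connectedComponentIn hyC (hCn.trans (monotone_tailInterior (le_max_left n m)))
  rw [← connectedComponentIn_eq hy] at hCy
  exact hCy.trans (subset_iUnion_of_subset (max n m) subset_rfl)

end Kernel

theorem dist_le_of_mapsTo_closedBall {f : ℂ → ℂ} {r M : ℝ} (hr : r < 1)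
    (hf : DifferentiableOn ℂ f (ball 0 1)) (hfM : MapsTo f (ball 0 1) (closedBall 0 M))
    {x y : ℂ} (hx : x ∈ closedBall 0 r) (hy : y ∈ closedBall 0 r) :
    dist (f x) (f y) ≤ 2 * M / (1 - r) * dist x y := by
  have hball : ∀ z ∈ closedBall (0 : ℂ) r, ball z (1 - r) ⊆ ball 0 1 := fun z hz =>
    ball_subset_ball' (by linarith [mem_closedBall_zero_iff.1 hz, dist_zero_right z])
  have hsub : closedBall (0 : ℂ) r ⊆ ball 0 1 := closedBall_subset_ball hr
  rw [dist_eq_norm, dist_eq_norm]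
  refine (convex_closedBall 0 r).norm_image_sub_le_of_norm_deriv_le
    (fun z hz => hf.differentiableAt (isOpen_ball.mem_nhds (hsub hz))) (fun z hz => ?_) hy hx
  exact norm_deriv_le_of_mapsTo_closedBall (by linarith) (hf.mono (hball z hz))
    (hfM.mono_left (hball z hz))

/-- Montel's theorem, on a closed subdisc. -/
theorem exists_tendstoUniformlyOn_closedBall_subseq {B : Set ℂ} (hB : IsBounded B)
    {G : ℕ → ℂ → ℂ} (hG : ∀ k, DifferentiableOn ℂ (G k) (ball 0 1))
    (hGB : ∀ k, MapsTo (G k) (ball 0 1) B) {r : ℝ} (hr : r < 1) :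
    ∃ ψ : ℕ → ℕ, StrictMono ψ ∧ ∃ f : ℂ → ℂ,
      TendstoUniformlyOn (fun k => G (ψ k)) f atTop (closedBall 0 r) := by
  obtain ⟨M, hM⟩ := hB.subset_closedBall 0
  have hGM : ∀ k, MapsTo (G k) (ball 0 1) (closedBall 0 M) := fun k => (hGB k).mono_right hM
  have hsub : closedBall (0 : ℂ) r ⊆ ball 0 1 := closedBall_subset_ball hr
  have : CompactSpace (closedBall (0 : ℂ) r) :=
    isCompact_iff_compactSpace.1 (isCompact_closedBall 0 r)
  let F : ℕ → BoundedContinuousFunction (closedBall (0 : ℂ) r) ℂ := fun k =>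
    .mkOfCompact ⟨(closedBall 0 r).domRestrict (G k), ((hG k).continuousOn.mono hsub).domRestrict⟩
  have hcompact : IsCompact (closure (range F)) := by
    refine BoundedContinuousFunction.arzela_ascoli (closedBall 0 M) (isCompact_closedBall 0 M)
      _ (by rintro _ x ⟨k, rfl⟩; exact hGM k (hsub x.2)) ?_
    refine equicontinuous_of_continuity_modulus (fun t => 2 * M / (1 - r) * t)
      (by simpa using (continuous_const_mul (2 * M / (1 - r))).tendsto 0) _ ?_
    rintro x y ⟨_, k, rfl⟩
    exact dist_le_of_mapsTo_closedBall hr (hG k) (hGM k) x.2 y.2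
  obtain ⟨g, -, ψ, hψ, hlim⟩ := hcompact.tendsto_subseq fun k => subset_closure (mem_range_self k)
  refine ⟨ψ, hψ, Function.extend Subtype.val g 0, ?_⟩
  have hg : Function.extend Subtype.val g 0 ∘ Subtype.val = g :=
    funext (Subtype.val_injective.extend_apply g 0)
  rw [tendstoUniformlyOn_iff_tendstoUniformly_comp_coe, hg]
  exact BoundedContinuousFunction.tendsto_iff_tendstoUniformly.1 hlim

theorem isCompact_segment {E : Type*} [NormedAddCommGroup E] [NormedSpace ℝ E] (x y : E) :
    IsCompact (segment ℝ x y) :=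
  segment_eq_image_lineMap ℝ x y ▸ isCompact_Icc.image AffineMap.lineMap_continuous

theorem DiffContOnCl.ball_subset_image_closedBall_of_pos {f : ℂ → ℂ} {z₀ : ℂ} {r ε : ℝ}
    (h : DiffContOnCl ℂ f (ball z₀ r)) (hr : 0 < r) (hε : 0 < ε)
    (hf : ∀ z ∈ sphere z₀ r, ε ≤ ‖f z - f z₀‖) : ball (f z₀) (ε / 2) ⊆ f '' closedBall z₀ r := by
  refine h.ball_subset_image_closedBall hr hf ?_
  by_contra hconst
  simp only [not_frequently, not_not] at hconst
  have hball : EqOn f (fun _ => f z₀) (ball z₀ r) :=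
    (h.differentiableOn.analyticOnNhd isOpen_ball).eqOn_of_preconnected_of_eventuallyEq
      analyticOnNhd_const (convex_ball z₀ r).isPreconnected (mem_ball_self hr) hconst
  have hclosed : EqOn f (fun _ => f z₀) (closedBall z₀ r) :=
    closure_ball z₀ hr.ne' ▸ hball.of_subset_closure h.continuousOn continuousOn_const
      subset_closure subset_rfl
  obtain ⟨w, hw⟩ := (NormedSpace.sphere_nonempty (x := z₀)).2 hr.le
  have := hf w hw
  rw [hclosed (sphere_subset_closedBall hw), sub_self, norm_zero] at this
  linarith

theorem eventually_ne_of_deriv_ne_zero {f : ℂ → ℂ} {s : Set ℂ} (hs : IsOpen s)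
    (hs' : IsPreconnected s) (hf : DifferentiableOn ℂ f s) {z₀ z : ℂ} (hz₀ : z₀ ∈ s)
    (hd : deriv f z₀ ≠ 0) (hz : z ∈ s) : ∀ᶠ w in 𝓝[≠] z, f w ≠ f z := by
  have han := hf.analyticOnNhd hs
  refine ((han z hz).eventually_eq_or_eventually_ne analyticAt_const).resolve_left fun hconst => ?_
  have heq : EqOn f (fun _ => f z) s :=
    han.eqOn_of_preconnected_of_eventuallyEq analyticOnNhd_const hs' hz hconst
  exact hd (by rw [(heq.eventuallyEq_of_mem (hs.mem_nhds hz₀)).deriv_eq, deriv_const])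

/-- Hurwitz-type stability of the open mapping property under locally uniform limits. -/
theorem eventually_ball_subset_image_of_tendstoLocallyUniformlyOn {G : ℕ → ℂ → ℂ} {f : ℂ → ℂ}
    {s : Set ℂ} (hs : IsOpen s) (hG : ∀ k, DifferentiableOn ℂ (G k) s)
    (hlim : TendstoLocallyUniformlyOn G f atTop s) {z : ℂ} (hz : z ∈ s)
    (hfz : ∀ᶠ w in 𝓝[≠] z, f w ≠ f z) :
    ∃ δ > 0, ∀ᶠ k in atTop, ball (f z) δ ⊆ G k '' s := by
  obtain ⟨ρ, hρ, hρs, hρf⟩ : ∃ ρ > 0, closedBall z ρ ⊆ s ∧ ∀ w ∈ sphere z ρ, f w ≠ f z := by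
    obtain ⟨t, ht, hts⟩ := Metric.eventually_nhds_iff_ball.1
      ((eventually_nhdsWithin_iff.1 hfz).and (hs.mem_nhds hz))
    refine ⟨t / 2, half_pos ht, fun w hw => (hts w (closedBall_subset_ball (half_lt_self ht) hw)).2,
      fun w hw => (hts w ?_).1 (ne_of_mem_sphere hw (half_pos ht).ne')⟩
    exact closedBall_subset_ball (half_lt_self ht) (sphere_subset_closedBall hw)
  have hfc : ContinuousOn f (closedBall z ρ) :=
    (hlim.continuousOn (Frequently.of_forall fun k => (hG k).continuousOn)).mono hρs
  obtain ⟨ε, hε, hεf⟩ : ∃ ε > 0, ∀ w ∈ sphere z ρ, ε ≤ ‖f w - f z‖ := by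
    obtain ⟨w₀, hw₀, hmin⟩ := (isCompact_sphere z ρ).exists_isMinOn
      ((NormedSpace.sphere_nonempty (x := z)).2 hρ.le)
      ((hfc.mono sphere_subset_closedBall).sub continuousOn_const).norm
    exact ⟨_, norm_pos_iff.2 (sub_ne_zero.2 (hρf w₀ hw₀)), fun w hw => hmin hw⟩
  have hunif : TendstoUniformlyOn G f atTop (closedBall z ρ) :=
    (tendstoLocallyUniformlyOn_iff_forall_isCompact hs).1 hlim _ hρs (isCompact_closedBall z ρ)
  refine ⟨ε / 4, by positivity, ?_⟩
  filter_upwards [Metric.tendstoUniformlyOn_iff.1 hunif (ε / 8) (by positivity)] with k hk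
  have hkz := hk z (mem_closedBall_self hρ.le)
  have hsphere : ∀ w ∈ sphere z ρ, 3 * ε / 4 ≤ ‖G k w - G k z‖ := by
    intro w hw
    have hkw := hk w (sphere_subset_closedBall hw)
    have := dist_triangle4 (f w) (G k w) (G k z) (f z)
    rw [dist_eq_norm (f w), dist_eq_norm (G k w), dist_comm (G k z)] at this
    linarith [hεf w hw]
  have himage := ((hG k).diffContOnCl_ball hρs).ball_subset_image_closedBall_of_pos hρ
    (by positivity) hsphere
  intro y hy
  refine image_mono hρs (himage (mem_ball.2 ?_))
  linarith [dist_triangle y (f z) (G k z), mem_ball.1 hy]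

theorem mapsTo_seqKernel_of_tendstoLocallyUniformlyOn {Ω : ℕ → Set ℂ} {G : ℕ → ℂ → ℂ}
    {f : ℂ → ℂ} {s : Set ℂ} (hs : IsOpen s) (hsc : Convex ℝ s)
    (hG : ∀ k, DifferentiableOn ℂ (G k) s) (hGΩ : ∀ k, MapsTo (G k) s (Ω k))
    (hlim : TendstoLocallyUniformlyOn G f atTop s) {z₀ : ℂ} (hz₀ : z₀ ∈ s)
    (hfz₀ : f z₀ ∈ seqKernel Ω) (hd : deriv f z₀ ≠ 0) : MapsTo f s (seqKernel Ω) := by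
  have hf : DifferentiableOn ℂ f s := hlim.differentiableOn (Eventually.of_forall hG) hs
  intro z hz
  have hseg : segment ℝ z₀ z ⊆ s := hsc.segment_subset hz₀ hz
  have hfseg : ContinuousOn f (segment ℝ z₀ z) := hf.continuousOn.mono hseg
  have hC : IsCompact (f '' segment ℝ z₀ z) := (isCompact_segment z₀ z).image_of_continuousOn hfseg
  have hCtail : f '' segment ℝ z₀ z ⊆ ⋃ n, tailInterior Ω n := by
    rintro _ ⟨w, hw, rfl⟩
    obtain ⟨δ, hδ, hev⟩ := eventually_ball_subset_image_of_tendstoLocallyUniformlyOn hs hG hlim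
      (hseg hw) (eventually_ne_of_deriv_ne_zero hs hsc.isPreconnected hf hz₀ hd (hseg hw))
    obtain ⟨N, hN⟩ := eventually_atTop.1 hev
    exact mem_iUnion.2 ⟨N, subset_tailInterior isOpen_ball
      (fun k hk => (hN k hk).trans (hGΩ k).image_subset) (mem_ball_self hδ)⟩
  obtain ⟨N, hN⟩ := hC.exists_subset_tailInterior hCtail
  exact ((convex_segment z₀ z).isPreconnected.image f hfseg).subset_seqKernel hN
    ⟨f z₀, mem_image_of_mem f (left_mem_segment ℝ z₀ z), hfz₀⟩
    (mem_image_of_mem f (right_mem_segment ℝ z₀ z))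

theorem mul_norm_deriv_le_eta_seqKernel {Ω : ℕ → Set ℂ} (hΩ : IsBounded (seqKernel Ω))
    {G : ℕ → ℂ → ℂ} {f : ℂ → ℂ} {r : ℝ} (hr : 0 < r)
    (hG : ∀ k, DifferentiableOn ℂ (G k) (ball 0 r)) (hGΩ : ∀ k, MapsTo (G k) (ball 0 r) (Ω k))
    (hlim : TendstoLocallyUniformlyOn G f atTop (ball 0 r)) (hf₀ : f 0 ∈ seqKernel Ω) :
    r * ‖deriv f 0‖ ≤ eta (seqKernel Ω) (f 0) := by
  by_cases hd : deriv f 0 = 0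
  · simpa [hd] using eta_nonneg _ _
  exact mul_norm_deriv_le_eta hΩ hr (hlim.differentiableOn (Eventually.of_forall hG) isOpen_ball)
    (mapsTo_seqKernel_of_tendstoLocallyUniformlyOn isOpen_ball (convex_ball 0 r) hG hGΩ hlim
      (mem_ball_self hr) hf₀ hd)

theorem eventually_lt_eta {W : ℕ → Set ℂ} (hW : ∀ n, IsBounded (W n)) {p₀ : ℂ} {c : ℝ}
    (hc : c < eta (seqKernel W) p₀) : ∀ᶠ x in atTop ×ˢ 𝓝 p₀, c < eta (W x.1) x.2 := by
  rcases lt_or_ge c 0 with hc₀ | hc₀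
  · exact Eventually.of_forall fun x => hc₀.trans_le (eta_nonneg _ _)
  obtain ⟨f, hf, hf0, hfW, hfc⟩ := exists_lt_norm_deriv_of_lt_eta hc hc₀
  obtain ⟨r, hcr, hr1⟩ : ∃ r, c / ‖deriv f 0‖ < r ∧ r < 1 :=
    exists_between ((div_lt_one (hc₀.trans_lt hfc)).2 hfc)
  have hr : 0 < r := (div_nonneg hc₀ (norm_nonneg _)).trans_lt hcr
  have hsub : closedBall (0 : ℂ) r ⊆ ball 0 1 := closedBall_subset_ball hr1
  have hC : IsCompact (f '' closedBall 0 r) :=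
    (isCompact_closedBall 0 r).image_of_continuousOn (hf.continuousOn.mono hsub)
  obtain ⟨N, hN⟩ := hC.exists_subset_tailInterior
    ((hfW.mono_left hsub).image_subset.trans seqKernel_subset_iUnion_tailInterior)
  obtain ⟨δ, hδ, hδN⟩ := hC.exists_thickening_subset_open isOpen_interior hN
  filter_upwards [prod_mem_prod (Ici_mem_atTop N) (ball_mem_nhds p₀ hδ)]
  rintro ⟨n, p⟩ ⟨hn, hp⟩
  have hshift : MapsTo (fun z => f z + (p - p₀)) (ball 0 r) (W n) := fun z hz =>
    tailInterior_subset hn <| hδN <| mem_thickening_iff.2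
      ⟨f z, mem_image_of_mem f (ball_subset_closedBall hz), by simpa [dist_eq_norm] using hp⟩
  have := mul_norm_deriv_le_eta (hW n) hr
    ((hf.mono (ball_subset_ball hr1.le)).add_const (p - p₀)) hshift
  rw [deriv_add_const, hf0, add_sub_cancel] at this
  exact ((div_lt_iff₀ (hc₀.trans_lt hfc)).1 hcr).trans_le this

theorem eventually_eta_lt {U : Set ℂ} (hU : IsBounded U) {W : ℕ → Set ℂ} {W₀ : Set ℂ}
    (hWU : ∀ n, W n ⊆ U) (hW₀ : IsBounded W₀)
    (hsub : ∀ σ : ℕ → ℕ, StrictMono σ → seqKernel (fun k => W (σ k)) = W₀) {p₀ : ℂ}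
    (hp₀ : p₀ ∈ W₀) {c : ℝ} (hc : eta W₀ p₀ < c) :
    ∀ᶠ x in atTop ×ˢ 𝓝 p₀, eta (W x.1) x.2 < c := by
  by_contra h
  obtain ⟨x, hx, hxc⟩ := frequently_iff_seq_forall.1 (by simpa using h :
    ∃ᶠ x in atTop ×ˢ 𝓝 p₀, c ≤ eta (W x.1) x.2)
  obtain ⟨φ, hφ, hnφ⟩ := strictMono_subseq_of_tendsto_atTop (tendsto_fst.comp hx)
  have hp : Tendsto (fun k => (x k).2) atTop (𝓝 p₀) := tendsto_snd.comp hx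
  obtain ⟨c', hc', hc'c⟩ := exists_between hc
  have hc'₀ : 0 < c' := (eta_nonneg W₀ p₀).trans_lt hc'
  have hG : ∀ k, ∃ g : ℂ → ℂ, DifferentiableOn ℂ g (ball 0 1) ∧ g 0 = (x (φ k)).2 ∧
      MapsTo g (ball 0 1) (W (x (φ k)).1) ∧ c' < ‖deriv g 0‖ :=
    fun k => exists_lt_norm_deriv_of_lt_eta (hc'c.trans_le (hxc (φ k))) hc'₀.le
  choose G hGd hG0 hGW hGc using hG
  obtain ⟨r, hr, hr1⟩ : ∃ r, eta W₀ p₀ / c' < r ∧ r < 1 :=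
    exists_between ((div_lt_one hc'₀).2 hc')
  have hr₀ : 0 < r := (div_nonneg (eta_nonneg W₀ p₀) hc'₀.le).trans_lt hr
  obtain ⟨ψ, hψ, f, hunif⟩ := exists_tendstoUniformlyOn_closedBall_subseq hU hGd
    (fun k => (hGW k).mono_right (hWU _)) hr1
  have hlim : TendstoLocallyUniformlyOn (fun k => G (ψ k)) f atTop (ball 0 r) :=
    hunif.tendstoLocallyUniformlyOn.mono ball_subset_closedBall
  have hGr : ∀ k, DifferentiableOn ℂ (G (ψ k)) (ball 0 r) :=
    fun k => (hGd _).mono (ball_subset_ball hr1.le)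
  have hf0 : f 0 = p₀ := tendsto_nhds_unique (hunif.tendsto_at (mem_closedBall_self hr₀.le))
    (by simp only [hG0]; exact hp.comp (hφ.comp hψ).tendsto_atTop)
  have hderiv : c' ≤ ‖deriv f 0‖ :=
    ge_of_tendsto' ((hlim.deriv (Eventually.of_forall hGr) isOpen_ball).tendsto_at
      (mem_ball_self hr₀)).norm fun k => (hGc _).le
  have hker : seqKernel (fun k => W (x (φ (ψ k))).1) = W₀ := hsub _ (hnφ.comp hψ)
  have := mul_norm_deriv_le_eta_seqKernel (hker ▸ hW₀) hr₀ hGr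
    (fun k => (hGW (ψ k)).mono_left (ball_subset_ball hr1.le)) hlim (by rw [hker, hf0]; exact hp₀)
  rw [hker, hf0] at this
  linarith [(div_lt_iff₀ hc'₀).1 hr, mul_le_mul_of_nonneg_left hderiv hr₀.le]

theorem eta_uniform_convergence_of_kernel_convergence_F_empty_interior_general
    (U : Set ℂ)
    (hUbdd : Bornology.IsBounded U)
    (W : ℕ → Set ℂ) (W₀ : Set ℂ)
    (hWU : ∀ n, W n ⊆ U)
    (hW₀U : W₀ ⊆ U)
    (hker : seqKernel W = W₀)
    (hsub : ∀ σ : ℕ → ℕ, StrictMono σ → seqKernel (fun k => W (σ k)) = W₀)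
    (hcont : ContinuousOn (eta W₀) W₀) :
    ∀ K : Set ℂ, IsCompact K → K ⊆ W₀ →
      TendstoUniformlyOn (fun n p => eta (W n) p) (fun p => eta W₀ p) atTop K := by
  intro K hK hKW₀
  refine (tendstoLocallyUniformlyOn_iff_tendstoUniformlyOn_of_compact hK).1
    (tendstoLocallyUniformlyOn_iff_filter.2 fun p hp => ?_)
  have hlim : Tendsto (fun x : ℕ × ℂ => eta (W x.1) x.2) (atTop ×ˢ 𝓝 p) (𝓝 (eta W₀ p)) :=
    tendsto_order.2 ⟨fun c hc => eventually_lt_eta (fun n => hUbdd.subset (hWU n)) (hker ▸ hc),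
      fun c hc => eventually_eta_lt hUbdd hWU (hUbdd.subset hW₀U) hsub (hKW₀ hp) hc⟩
  have hcontK : Tendsto (fun x : ℕ × ℂ => eta W₀ x.2) (atTop ×ˢ 𝓝[K] p) (𝓝 (eta W₀ p)) :=
    ((hcont p (hKW₀ hp)).mono hKW₀).tendsto.comp tendsto_snd
  rw [tendstoUniformlyOnFilter_iff_tendsto]
  exact (hcontK.prodMk_nhds (hlim.mono_left (prod_mono le_rfl nhdsWithin_le_nhds))).trans
    (nhds_le_uniformity _)

/-- Theorem 1.8(2) for the trivial single-leaf foliation of a bounded plane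
domain `U`: if `(W n)` converges to `W₀` in the kernel sense, the set `F` has
empty interior in `ℂ`, and `η_{W₀}` is continuous on `W₀`, then
`η_{W n} → η_{W₀}` uniformly on every compact subset of `W₀`. -/
theorem eta_uniform_convergence_of_kernel_convergence_F_empty_interior
    (U : Set ℂ) (hUopen : IsOpen U) (hUconn : IsConnected U)
    (hUbdd : Bornology.IsBounded U)
    (W : ℕ → Set ℂ) (W₀ : Set ℂ)
    (hWopen : ∀ n, IsOpen (W n)) (hWconn : ∀ n, IsConnected (W n))
    (hWU : ∀ n, W n ⊆ U) (h0 : ∀ n, (0 : ℂ) ∈ W n)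
    (hW₀open : IsOpen W₀) (hW₀conn : IsConnected W₀) (hW₀U : W₀ ⊆ U)
    (h0W₀ : (0 : ℂ) ∈ W₀)
    (hker : seqKernel W = W₀)
    (hsub : ∀ σ : ℕ → ℕ, StrictMono σ → seqKernel (fun k => W (σ k)) = W₀)
    (hF : interior (Fset W W₀) = ∅)
    (hcont : ContinuousOn (eta W₀) W₀) :
    ∀ K : Set ℂ, IsCompact K → K ⊆ W₀ →
      TendstoUniformlyOn (fun n p => eta (W n) p) (fun p => eta W₀ p) atTop K :=
  eta_uniform_convergence_of_kernel_convergence_F_empty_interior_general U hUbdd W W₀ hWU hW₀U hker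
    hsub hcont
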